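/- arXiv:2301.07730 — 2 statements merged into one kernel-verified Lean document; each statement's English description precedes it below -/
import Mathlib

section
/- Let d_A, d_B ≥ 1, κ ∈ (0,1), and α ≥ 1. Let |ψ⟩, |φ⟩ ∈ ℂ^{d_A}⊗ℂ^{d_B} be unit vectors, with reduced density matrices ρ = Tr_B(|ψ⟩⟨ψ|) and σ = Tr_B(|φ⟩⟨φ|). Let P be an odd real polynomial such that |P(x)| ≤ 2 for every x ∈ [−1,1] and |P(x) − sgn(x)| ≤ κ for every x ∈ [−1,1] with |x| ≥ κ. Let K = Tr_A(|ψ⟩⟨φ|) ∈ M_{d_B}(ℂ), fix a singular value decomposition K = U·Σ·V†, and set W̃ = U·P(Σ/α)·V†, where P is applied entrywise to the diagonal of Σ/α. Then |⟨ψ|(I_{d_A}⊗W̃)|φ⟩ − F(ρ,σ)| ≤ 4·d_A·α·κ. -/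
open scoped Matrix Kronecker ComplexOrder

/-- The operator (spectral) norm of a square complex matrix. -/
noncomputable def opNorm {n : Type*} [Fintype n] [DecidableEq n] (A : Matrix n n ℂ) : ℝ :=
  ‖Matrix.toEuclideanCLM (𝕜 := ℂ) A‖

/-- The positive semidefinite square root of a positive semidefinite matrix
(the Mathlib definition of December 2024, since removed from Mathlib). -/
noncomputable def Matrix.PosSemidef.sqrt {n : Type*} [Fintype n] [DecidableEq n] {𝕜 : Type*}
    [RCLike 𝕜] {A : Matrix n n 𝕜} (hA : A.PosSemidef) : Matrix n n 𝕜 :=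
  hA.1.eigenvectorUnitary.1 * Matrix.diagonal ((↑) ∘ (√·) ∘ hA.1.eigenvalues) *
    (star hA.1.eigenvectorUnitary : Matrix n n 𝕜)

/-- The trace norm `‖A‖₁ = Tr √(Aᴴ A)` of a square complex matrix. -/
noncomputable def traceNorm {n : Type*} [Fintype n] [DecidableEq n] (A : Matrix n n ℂ) : ℝ :=
  ((Matrix.posSemidef_conjTranspose_mul_self A).sqrt.trace).re

/-- The (square-root) fidelity `F(ρ,σ) = ‖√ρ √σ‖₁` of positive semidefinite matrices. -/
noncomputable def fidelity {n : Type*} [Fintype n] [DecidableEq n] {ρ σ : Matrix n n ℂ}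
    (hρ : ρ.PosSemidef) (hσ : σ.PosSemidef) : ℝ :=
  traceNorm (hρ.sqrt * hσ.sqrt)

/-- Functional calculus for a Hermitian matrix: `f(A) = Σ_i f(λ_i) |v_i⟩⟨v_i|`. -/
noncomputable def matFun {n : Type*} [Fintype n] [DecidableEq n] {A : Matrix n n ℂ}
    (hA : A.IsHermitian) (f : ℝ → ℝ) : Matrix n n ℂ :=
  (hA.eigenvectorUnitary : Matrix n n ℂ) *
    Matrix.diagonal (fun i => (f (hA.eigenvalues i) : ℂ)) *
    (star (hA.eigenvectorUnitary : Matrix n n ℂ))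

/-- Partial trace over the first tensor factor. -/
noncomputable def ptraceA {a b : Type*} [Fintype a] (X : Matrix (a × b) (a × b) ℂ) :
    Matrix b b ℂ :=
  Matrix.of fun i j => ∑ k, X (k, i) (k, j)

/-- Partial trace over the second tensor factor. -/
noncomputable def ptraceB {a b : Type*} [Fintype b] (X : Matrix (a × b) (a × b) ℂ) :
    Matrix a a ℂ :=
  Matrix.of fun i j => ∑ k, X (i, k) (j, k)

/-- The outer product `|ψ⟩⟨φ|`. -/
def outer {a : Type*} (ψ φ : a → ℂ) : Matrix a a ℂ :=
  Matrix.of fun i j => ψ i * (starRingEnd ℂ) (φ j)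

/-- The Euclidean norm of a finitely supported complex vector. -/
noncomputable def evnorm {a : Type*} [Fintype a] (v : a → ℂ) : ℝ :=
  Real.sqrt (∑ i, ‖v i‖ ^ 2)

/-!
Reshape `ψ` and `φ` into `d_A × d_B` matrices `A` and `B`, so that `ρ = A Aᴴ`, `σ = B Bᴴ` and
`K = Aᵀ B̄`. Then `⟨ψ|(I ⊗ W)|φ⟩ = Tr (W Kᴴ)`, which is `∑ᵢ cᵢ sᵢ` for `W = U diag(c) Vᴴ`.
Since `Tr √(M Mᴴ) = Tr √(Mᴴ M)`, the fidelity is `Tr √(√σ ρ √σ) = Tr √(K̄ K̄ᴴ) = ∑ᵢ sᵢ`, so the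
error is `∑ᵢ (P(sᵢ/α) - 1) sᵢ`. Cauchy–Schwarz with `W = U Vᴴ` gives `∑ᵢ sᵢ ≤ 1`. A term is at most
`κ sᵢ ≤ ακ` when `sᵢ ≥ ακ`, where `P` approximates the sign, and at most `3 sᵢ < 3ακ` otherwise;
at most `rank K ≤ d_A` terms are nonzero.
-/

open Matrix

theorem inv_sqrt_mul_mul_inv_sqrt_mul_self {x : ℝ} (hx : 0 ≤ x) :
    (√x)⁻¹ * x * (√x)⁻¹ * x = x := by
  rcases hx.eq_or_lt with rfl | hx
  · simp
  · rw [mul_assoc _ x, mul_comm x, ← mul_assoc, ← mul_inv, Real.mul_self_sqrt hx.le,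
      inv_mul_cancel₀ hx.ne', one_mul]

section SquareRoot

open scoped MatrixOrder

namespace Matrix

variable {𝕜 : Type*} [RCLike 𝕜] {m n : Type*} [Fintype m] [DecidableEq m] [Fintype n]
  [DecidableEq n]

theorem PosSemidef.sqrt_eq_cfc_sqrt {A : Matrix n n 𝕜} (hA : A.PosSemidef) :
    hA.sqrt = CFC.sqrt A := by
  rw [CFC.sqrt_eq_cfc, cfc_nnreal_eq_real _ A, hA.1.cfc_eq]
  simp only [IsHermitian.cfc, Unitary.conjStarAlgAut_apply, PosSemidef.sqrt]
  congr 3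
  funext i
  simp [max_eq_left (hA.eigenvalues_nonneg i)]

theorem PosSemidef.trace_sqrt {A : Matrix n n 𝕜} (hA : A.PosSemidef) :
    hA.sqrt.trace = ∑ i, ((√(hA.1.eigenvalues i) : ℝ) : 𝕜) := by
  rw [PosSemidef.sqrt, trace_mul_cycle, Unitary.coe_star_mul_self, one_mul, trace_diagonal]
  rfl

/-- The columns of `M` with `d j = 0` vanish, so the junk value `(√0)⁻¹ = 0` is harmless. -/
theorem cfcSqrt_self_mul_conjTranspose_of_conjTranspose_mul_self_eq_diagonal (M : Matrix m n 𝕜)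
    {d : n → ℝ} (hd : ∀ j, 0 ≤ d j) (hM : Mᴴ * M = diagonal fun j => (d j : 𝕜)) :
    CFC.sqrt (M * Mᴴ) = M * diagonal (fun j => (((√(d j))⁻¹ : ℝ) : 𝕜)) * Mᴴ := by
  set D := diagonal fun j => (((√(d j))⁻¹ : ℝ) : 𝕜)
  have hDMMD : D * (Mᴴ * M) * D * (Mᴴ * M) = Mᴴ * M := by
    simp only [D, hM, diagonal_mul_diagonal, ← RCLike.ofReal_mul,
      inv_sqrt_mul_mul_inv_sqrt_mul_self (hd _)]
  have hcols : M * (D * (Mᴴ * M) * D - 1) * Mᴴ = 0 := by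
    refine (mul_conjTranspose_mul_self_eq_zero M _).1 ?_
    rw [Matrix.mul_assoc, Matrix.sub_mul, hDMMD, Matrix.one_mul, sub_self, Matrix.mul_zero]
  refine CFC.sqrt_unique ?_ (nonneg_iff_posSemidef.2
    ((posSemidef_diagonal_iff.2 fun j => ?_).mul_mul_conjTranspose_same M))
  · rw [← sub_eq_zero, ← hcols]
    simp only [Matrix.mul_assoc, Matrix.mul_sub, Matrix.sub_mul, Matrix.mul_one]
  · exact_mod_cast inv_nonneg.2 (Real.sqrt_nonneg _)

theorem trace_cfcSqrt_self_mul_conjTranspose_of_conjTranspose_mul_self_eq_diagonal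
    (M : Matrix m n 𝕜) {d : n → ℝ} (hd : ∀ j, 0 ≤ d j)
    (hM : Mᴴ * M = diagonal fun j => (d j : 𝕜)) :
    (CFC.sqrt (M * Mᴴ)).trace = ∑ j, ((√(d j) : ℝ) : 𝕜) := by
  rw [cfcSqrt_self_mul_conjTranspose_of_conjTranspose_mul_self_eq_diagonal M hd hM,
    trace_mul_cycle, hM, diagonal_mul_diagonal, trace_diagonal]
  simp only [← RCLike.ofReal_mul, ← div_eq_mul_inv, Real.div_sqrt]

theorem trace_cfcSqrt_self_mul_conjTranspose (M : Matrix m n 𝕜) :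
    (CFC.sqrt (M * Mᴴ)).trace = (CFC.sqrt (Mᴴ * M)).trace := by
  have hMM := posSemidef_conjTranspose_mul_self M
  have hdiag := hMM.1.conjStarAlgAut_star_eigenvectorUnitary
  set W := hMM.1.eigenvectorUnitary
  rw [Unitary.conjStarAlgAut_star_apply, ← Matrix.mul_assoc, star_eq_conjTranspose,
    ← conjTranspose_mul, Matrix.mul_assoc, Function.comp_def] at hdiag
  have hgram : (M * W.1) * (M * W.1)ᴴ = M * Mᴴ := by
    rw [conjTranspose_mul, Matrix.mul_assoc, ← Matrix.mul_assoc W.1,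
      ← star_eq_conjTranspose, Unitary.mul_star_self_of_mem W.2, Matrix.one_mul]
  rw [← hgram, trace_cfcSqrt_self_mul_conjTranspose_of_conjTranspose_mul_self_eq_diagonal _
    hMM.eigenvalues_nonneg hdiag, ← hMM.sqrt_eq_cfc_sqrt, hMM.trace_sqrt]

theorem conjTranspose_mul_mul_cancel_left {l : Type*} {U : Matrix n n 𝕜}
    (hU : U ∈ unitaryGroup n 𝕜) (X : Matrix n l 𝕜) : Uᴴ * (U * X) = X := by
  rw [← Matrix.mul_assoc, ← star_eq_conjTranspose, Unitary.star_mul_self_of_mem hU,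
    Matrix.one_mul]

theorem map_starRingEnd_mem_unitaryGroup {U : Matrix n n 𝕜} (hU : U ∈ unitaryGroup n 𝕜) :
    U.map (starRingEnd 𝕜) ∈ unitaryGroup n 𝕜 := by
  rw [mem_unitaryGroup_iff', star_eq_conjTranspose,
    ← conjTranspose_map (starRingEnd 𝕜) (fun _ => rfl), ← Matrix.map_mul,
    ← star_eq_conjTranspose, Unitary.star_mul_self_of_mem hU,
    Matrix.map_one _ (map_zero _) (map_one _)]

theorem svd_mul_conjTranspose_svd {U V : Matrix n n 𝕜} (hV : V ∈ unitaryGroup n 𝕜)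
    (a b : n → 𝕜) :
    U * diagonal a * Vᴴ * (U * diagonal b * Vᴴ)ᴴ = U * diagonal (a * star b) * Uᴴ := by
  simp only [conjTranspose_mul, conjTranspose_conjTranspose, diagonal_conjTranspose,
    Matrix.mul_assoc, conjTranspose_mul_mul_cancel_left hV]
  simp only [← Matrix.mul_assoc, diagonal_mul_diagonal]
  rfl

theorem trace_svd_mul_conjTranspose_svd {U V : Matrix n n 𝕜} (hU : U ∈ unitaryGroup n 𝕜)
    (hV : V ∈ unitaryGroup n 𝕜) (a b : n → 𝕜) :
    (U * diagonal a * Vᴴ * (U * diagonal b * Vᴴ)ᴴ).trace = ∑ i, a i * star (b i) := by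
  rw [svd_mul_conjTranspose_svd hV, trace_mul_cycle, ← star_eq_conjTranspose,
    Unitary.star_mul_self_of_mem hU, Matrix.one_mul, trace_diagonal]
  rfl

theorem trace_cfcSqrt_svd_mul_conjTranspose {U V : Matrix n n 𝕜} (hU : U ∈ unitaryGroup n 𝕜)
    (hV : V ∈ unitaryGroup n 𝕜) {s : n → ℝ} (hs : ∀ i, 0 ≤ s i) :
    (CFC.sqrt (U * diagonal (fun i => (s i : 𝕜)) * Vᴴ *
      (U * diagonal (fun i => (s i : 𝕜)) * Vᴴ)ᴴ)).trace = ∑ i, (s i : 𝕜) := by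
  set S := diagonal fun i => (s i : 𝕜)
  have hS : Sᴴ = S := by simp [S, diagonal_conjTranspose]
  have hgram : (U * S)ᴴ * (U * S) = diagonal fun i => ((s i ^ 2 : ℝ) : 𝕜) := by
    rw [conjTranspose_mul, Matrix.mul_assoc, conjTranspose_mul_mul_cancel_left hU, hS]
    simp [S, sq]
  have hKK : U * S * Vᴴ * (U * S * Vᴴ)ᴴ = U * S * (U * S)ᴴ := by
    simp only [conjTranspose_mul, conjTranspose_conjTranspose, Matrix.mul_assoc,
      conjTranspose_mul_mul_cancel_left hV]
  rw [hKK, trace_cfcSqrt_self_mul_conjTranspose_of_conjTranspose_mul_self_eq_diagonal _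
    (fun i => sq_nonneg (s i)) hgram]
  simp only [Real.sqrt_sq (hs _)]

theorem rank_svd {U V : Matrix n n 𝕜} (hU : U ∈ unitaryGroup n 𝕜) (hV : V ∈ unitaryGroup n 𝕜)
    (w : n → 𝕜) : (U * diagonal w * Vᴴ).rank = Fintype.card {i // w i ≠ 0} := by
  rw [rank_mul_eq_left_of_isUnit_det, rank_mul_eq_right_of_isUnit_det, rank_diagonal]
  · exact isUnit_det_of_left_inverse (Unitary.star_mul_self_of_mem hU)
  · rw [← star_eq_conjTranspose]
    exact isUnit_det_of_left_inverse (Unitary.mul_star_self_of_mem hV)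

end Matrix

theorem traceNorm_eq_re_trace_cfcSqrt {n : Type*} [Fintype n] [DecidableEq n]
    (X : Matrix n n ℂ) : traceNorm X = (CFC.sqrt (Xᴴ * X)).trace.re := by
  rw [traceNorm, PosSemidef.sqrt_eq_cfc_sqrt]

theorem fidelity_eq_re_trace_cfcSqrt {m n : Type*} [Fintype m] [DecidableEq m] [Fintype n]
    [DecidableEq n] {ρ σ : Matrix m m ℂ} (hρ : ρ.PosSemidef) (hσ : σ.PosSemidef)
    {A B : Matrix m n ℂ} (hρA : ρ = A * Aᴴ) (hσB : σ = B * Bᴴ) :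
    fidelity hρ hσ = (CFC.sqrt ((Aᴴ * B) * (Aᴴ * B)ᴴ)).trace.re := by
  have hsa : ∀ {C : Matrix m m ℂ}, (CFC.sqrt C)ᴴ = CFC.sqrt C := fun {C} =>
    (CFC.sqrt_nonneg C).isSelfAdjoint
  have h1 : (CFC.sqrt ρ * CFC.sqrt σ)ᴴ * (CFC.sqrt ρ * CFC.sqrt σ) =
      (CFC.sqrt σ * A) * (CFC.sqrt σ * A)ᴴ := by
    rw [conjTranspose_mul, conjTranspose_mul, hsa, hsa, Matrix.mul_assoc,
      ← Matrix.mul_assoc (CFC.sqrt ρ), CFC.sqrt_mul_sqrt_self ρ (nonneg_iff_posSemidef.2 hρ), hρA]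
    simp only [Matrix.mul_assoc]
  have h2 : (CFC.sqrt σ * A)ᴴ * (CFC.sqrt σ * A) = (Aᴴ * B) * (Aᴴ * B)ᴴ := by
    rw [conjTranspose_mul, hsa, Matrix.mul_assoc, ← Matrix.mul_assoc (CFC.sqrt σ),
      CFC.sqrt_mul_sqrt_self σ (nonneg_iff_posSemidef.2 hσ), hσB]
    simp only [conjTranspose_mul, conjTranspose_conjTranspose, Matrix.mul_assoc]
  rw [fidelity, traceNorm_eq_re_trace_cfcSqrt, hρ.sqrt_eq_cfc_sqrt, hσ.sqrt_eq_cfc_sqrt, h1,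
    trace_cfcSqrt_self_mul_conjTranspose, h2]

end SquareRoot

theorem evnorm_eq_norm_toLp {ι : Type*} [Fintype ι] (v : ι → ℂ) :
    evnorm v = ‖WithLp.toLp 2 v‖ :=
  (EuclideanSpace.norm_eq _).symm

theorem norm_star_dotProduct_mulVec_le {ι : Type*} [Fintype ι] [DecidableEq ι]
    {M : Matrix ι ι ℂ} (hM : M ∈ unitaryGroup ι ℂ) (ψ φ : ι → ℂ) :
    ‖star ψ ⬝ᵥ (M *ᵥ φ)‖ ≤ evnorm ψ * evnorm φ := by
  have hiso : ‖WithLp.toLp 2 (M *ᵥ φ)‖ = ‖WithLp.toLp 2 φ‖ := by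
    rw [← toEuclideanCLM_toLp]
    exact ContinuousLinearMap.norm_map_of_mem_unitary (Unitary.map_mem toEuclideanCLM hM) _
  rw [evnorm_eq_norm_toLp, evnorm_eq_norm_toLp, ← hiso, dotProduct_comm,
    ← EuclideanSpace.inner_toLp_toLp]
  exact norm_inner_le_norm _ _

section PartialTrace

variable {a b : Type*}

theorem ptraceB_outer [Fintype b] (ψ φ : a × b → ℂ) :
    ptraceB (outer ψ φ) = of (Function.curry ψ) * (of (Function.curry φ))ᴴ := by
  ext i j
  simp [ptraceB, outer, mul_apply]

theorem ptraceA_outer [Fintype a] (ψ φ : a × b → ℂ) :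
    ptraceA (outer ψ φ) =
      (of (Function.curry ψ))ᵀ * (of (Function.curry φ)).map (starRingEnd ℂ) := by
  ext i j
  simp [ptraceA, outer, mul_apply]

theorem rank_ptraceA_outer_le [Fintype a] [Fintype b] (ψ φ : a × b → ℂ) :
    (ptraceA (outer ψ φ)).rank ≤ Fintype.card a := by
  rw [ptraceA_outer]
  exact (rank_mul_le_left _ _).trans (rank_le_card_width _)

theorem star_dotProduct_one_kronecker_mulVec [Fintype a] [Fintype b] [DecidableEq a]
    (ψ φ : a × b → ℂ) (W : Matrix b b ℂ) :
    star ψ ⬝ᵥ (((1 : Matrix a a ℂ) ⊗ₖ W) *ᵥ φ) = (W * (ptraceA (outer ψ φ))ᴴ).trace := by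
  simp only [dotProduct, mulVec, trace, diag_apply, mul_apply, conjTranspose_apply, ptraceA, outer,
    of_apply, Pi.star_apply, kroneckerMap_apply, one_apply, Fintype.sum_prod_type, ite_mul,
    one_mul, zero_mul, Finset.sum_ite_irrel, Finset.sum_const_zero, Finset.sum_ite_eq,
    Finset.mem_univ, if_true, Finset.mul_sum, star_sum, star_mul', Complex.star_def,
    Complex.conj_conj]
  rw [Finset.sum_comm]
  refine Finset.sum_congr rfl fun i _ => Finset.sum_comm.trans ?_
  refine Finset.sum_congr rfl fun k _ => Finset.sum_congr rfl fun j _ => ?_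
  ring

variable [Fintype a] [Fintype b] [DecidableEq b] {ψ φ : a × b → ℂ} {U V : Matrix b b ℂ}
  {s : b → ℝ}

theorem star_dotProduct_one_kronecker_svd_mulVec [DecidableEq a] (hU : U ∈ unitaryGroup b ℂ)
    (hV : V ∈ unitaryGroup b ℂ)
    (hK : ptraceA (outer ψ φ) = U * diagonal (fun i => (s i : ℂ)) * Vᴴ) (c : b → ℝ) :
    star ψ ⬝ᵥ (((1 : Matrix a a ℂ) ⊗ₖ (U * diagonal (fun i => (c i : ℂ)) * Vᴴ)) *ᵥ φ) =
      ((∑ i, c i * s i : ℝ) : ℂ) := by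
  rw [star_dotProduct_one_kronecker_mulVec, hK, trace_svd_mul_conjTranspose_svd hU hV]
  simp

theorem sum_le_evnorm_mul_evnorm_of_svd [DecidableEq a] (hU : U ∈ unitaryGroup b ℂ)
    (hV : V ∈ unitaryGroup b ℂ)
    (hK : ptraceA (outer ψ φ) = U * diagonal (fun i => (s i : ℂ)) * Vᴴ) :
    ∑ i, s i ≤ evnorm ψ * evnorm φ := by
  have hUV : U * diagonal (fun _ => ((1 : ℝ) : ℂ)) * Vᴴ ∈ unitaryGroup b ℂ := by
    simpa [star_eq_conjTranspose] using mul_mem hU (Unitary.star_mem hV)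
  have h := norm_star_dotProduct_mulVec_le (kronecker_mem_unitary (one_mem _) hUV) ψ φ
  rw [star_dotProduct_one_kronecker_svd_mulVec hU hV hK, Complex.norm_real,
    Real.norm_eq_abs] at h
  simpa using (le_abs_self _).trans h

theorem fidelity_ptraceB_outer_eq_sum_of_svd [DecidableEq a] (hU : U ∈ unitaryGroup b ℂ)
    (hV : V ∈ unitaryGroup b ℂ) (hs : ∀ i, 0 ≤ s i)
    (hK : ptraceA (outer ψ φ) = U * diagonal (fun i => (s i : ℂ)) * Vᴴ)
    (hρ : (ptraceB (outer ψ ψ)).PosSemidef) (hσ : (ptraceB (outer φ φ)).PosSemidef) :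
    fidelity hρ hσ = ∑ i, s i := by
  have hconj : (of (Function.curry ψ))ᴴ * of (Function.curry φ) =
      U.map (starRingEnd ℂ) * diagonal (fun i => (s i : ℂ)) * (V.map (starRingEnd ℂ))ᴴ := by
    have h := congrArg (Matrix.map · (starRingEnd ℂ)) hK
    simp only [ptraceA_outer, Matrix.map_mul, Matrix.map_map, diagonal_map (map_zero _),
      Function.comp_def, Complex.conj_conj, Complex.conj_ofReal,
      conjTranspose_map (starRingEnd ℂ) (fun _ => rfl)] at h
    exact h
  have htrace := trace_cfcSqrt_svd_mul_conjTranspose (map_starRingEnd_mem_unitaryGroup hU)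
    (map_starRingEnd_mem_unitaryGroup hV) hs
  rw [RCLike.ofReal_eq_complex_ofReal] at htrace
  rw [fidelity_eq_re_trace_cfcSqrt hρ hσ (ptraceB_outer ψ ψ) (ptraceB_outer φ φ), hconj, htrace,
    ← Complex.ofReal_sum, Complex.ofReal_re]

theorem card_ne_zero_le_of_svd (hU : U ∈ unitaryGroup b ℂ) (hV : V ∈ unitaryGroup b ℂ)
    (hK : ptraceA (outer ψ φ) = U * diagonal (fun i => (s i : ℂ)) * Vᴴ) :
    (Finset.univ.filter fun i => s i ≠ 0).card ≤ Fintype.card a := by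
  have h := rank_ptraceA_outer_le ψ φ
  simpa only [hK, rank_svd hU hV, Fintype.card_subtype, ne_eq, Complex.ofReal_eq_zero] using h

end PartialTrace

theorem abs_sum_le_card_ne_zero_mul {ι : Type*} [Fintype ι] (f : ι → ℝ) {c : ℝ}
    (hf : ∀ i, |f i| ≤ c) : |∑ i, f i| ≤ (Finset.univ.filter fun i => f i ≠ 0).card * c := by
  rw [← Finset.sum_filter_ne_zero, ← nsmul_eq_mul]
  exact (Finset.abs_sum_le_sum_abs _ _).trans (Finset.sum_le_card_nsmul _ _ _ fun i _ => hf i)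

theorem abs_eval_div_mul_sub_le {P : Polynomial ℝ} {κ α t : ℝ} (hκ : 0 < κ) (hα : 1 ≤ α)
    (hbound : ∀ x : ℝ, -1 ≤ x → x ≤ 1 → |P.eval x| ≤ 2)
    (happrox : ∀ x : ℝ, -1 ≤ x → x ≤ 1 → κ ≤ |x| → |P.eval x - Real.sign x| ≤ κ)
    (ht0 : 0 ≤ t) (ht1 : t ≤ 1) : |P.eval (t / α) * t - t| ≤ 3 * α * κ := by
  have hα0 : 0 < α := one_pos.trans_le hα
  have hx0 : 0 ≤ t / α := div_nonneg ht0 hα0.le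
  have hx1 : t / α ≤ 1 := (div_le_one hα0).2 (ht1.trans hα)
  rw [← sub_one_mul, abs_mul, abs_of_nonneg ht0]
  rcases le_or_gt κ (t / α) with hbig | hsmall
  · have hP := happrox _ (by linarith) hx1 (by rwa [abs_of_nonneg hx0])
    rw [Real.sign_of_pos (hκ.trans_le hbig)] at hP
    nlinarith [mul_le_mul_of_nonneg_right hP ht0]
  · have hP := abs_le.1 (hbound _ (by linarith) hx1)
    have ht : t < α * κ := by rwa [div_lt_iff₀ hα0, mul_comm] at hsmall
    have h3 : |P.eval (t / α) - 1| ≤ 3 := abs_le.2 ⟨by linarith, by linarith⟩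
    nlinarith [mul_le_mul_of_nonneg_right h3 ht0]

theorem abs_sum_eval_div_mul_sub_le {ι : Type*} [Fintype ι] {P : Polynomial ℝ} {κ α : ℝ}
    (hκ : 0 < κ) (hα : 1 ≤ α) (hbound : ∀ x : ℝ, -1 ≤ x → x ≤ 1 → |P.eval x| ≤ 2)
    (happrox : ∀ x : ℝ, -1 ≤ x → x ≤ 1 → κ ≤ |x| → |P.eval x - Real.sign x| ≤ κ)
    {s : ι → ℝ} (hs : ∀ i, 0 ≤ s i) (hsum : ∑ i, s i ≤ 1) :
    |∑ i, (P.eval (s i / α) * s i - s i)| ≤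
      (Finset.univ.filter fun i => s i ≠ 0).card * (3 * α * κ) := by
  have hterm i : |P.eval (s i / α) * s i - s i| ≤ 3 * α * κ :=
    abs_eval_div_mul_sub_le hκ hα hbound happrox (hs i)
      ((Finset.single_le_sum (fun j _ => hs j) (Finset.mem_univ i)).trans hsum)
  have hακ : 0 ≤ 3 * α * κ := by
    have := one_pos.trans_le hα
    positivity
  refine (abs_sum_le_card_ne_zero_mul _ hterm).trans (mul_le_mul_of_nonneg_right ?_ hακ)
  exact_mod_cast Finset.card_le_card <|
    Finset.monotone_filter_right _ fun i _ => mt fun hs0 => by simp [hs0]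

theorem uhlmann_explicit_robust_general (dA dB : ℕ)
    (κ α : ℝ) (hκ0 : 0 < κ) (hα : 1 ≤ α)
    (ψ φ : Fin dA × Fin dB → ℂ) (hψ : evnorm ψ = 1) (hφ : evnorm φ = 1)
    (ρ σ : Matrix (Fin dA) (Fin dA) ℂ)
    (hρdef : ρ = ptraceB (outer ψ ψ)) (hσdef : σ = ptraceB (outer φ φ))
    (P : Polynomial ℝ)
    (hbound : ∀ x : ℝ, -1 ≤ x → x ≤ 1 → |P.eval x| ≤ 2)
    (happrox : ∀ x : ℝ, -1 ≤ x → x ≤ 1 → κ ≤ |x| → |P.eval x - Real.sign x| ≤ κ)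
    (K : Matrix (Fin dB) (Fin dB) ℂ) (hKdef : K = ptraceA (outer ψ φ))
    (U V : Matrix (Fin dB) (Fin dB) ℂ)
    (hU : U ∈ Matrix.unitaryGroup (Fin dB) ℂ) (hV : V ∈ Matrix.unitaryGroup (Fin dB) ℂ)
    (s : Fin dB → ℝ) (hs : ∀ i, 0 ≤ s i)
    (hSVD : K = U * Matrix.diagonal (fun i => (s i : ℂ)) * Vᴴ)
    (Wt : Matrix (Fin dB) (Fin dB) ℂ)
    (hW : Wt = U * Matrix.diagonal (fun i => (Complex.ofReal (P.eval (s i / α)))) * Vᴴ) :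
    ∀ (hρ : ρ.PosSemidef) (hσ : σ.PosSemidef),
      ‖star ψ ⬝ᵥ (((1 : Matrix (Fin dA) (Fin dA) ℂ) ⊗ₖ Wt) *ᵥ φ) - (fidelity hρ hσ : ℂ)‖
        ≤ 4 * dA * α * κ := by
  intro hρ hσ
  subst hρdef hσdef
  have hK := hKdef.symm.trans hSVD
  have hsum := sum_le_evnorm_mul_evnorm_of_svd hU hV hK
  have hcard := card_ne_zero_le_of_svd hU hV hK
  rw [hψ, hφ, mul_one] at hsum
  rw [Fintype.card_fin] at hcard
  rw [hW, star_dotProduct_one_kronecker_svd_mulVec hU hV hK,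
    fidelity_ptraceB_outer_eq_sum_of_svd hU hV hs hK, ← Complex.ofReal_sub, Complex.norm_real,
    Real.norm_eq_abs, ← Finset.sum_sub_distrib]
  calc _ ≤ _ := abs_sum_eval_div_mul_sub_le hκ0 hα hbound happrox hs hsum
    _ ≤ dA * (3 * α * κ) := by gcongr
    _ ≤ 4 * dA * α * κ := by nlinarith [mul_pos (one_pos.trans_le hα) hκ0]

/-- Robust explicit Uhlmann transformation: if `P` is an odd polynomial bounded by `2` on
`[−1,1]` that `κ`-approximates the sign function away from `[−κ,κ]`, and
`Wt = U P(Σ/α) V†` where `K = Tr_A |ψ⟩⟨φ| = U Σ V†` is a singular value decomposition, then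
`|⟨ψ|(I⊗Wt)|φ⟩ − F(ρ,σ)| ≤ 4·d_A·α·κ`. -/
theorem uhlmann_explicit_robust (dA dB : ℕ) (hdA : 1 ≤ dA) (hdB : 1 ≤ dB)
    (κ α : ℝ) (hκ0 : 0 < κ) (hκ1 : κ < 1) (hα : 1 ≤ α)
    (ψ φ : Fin dA × Fin dB → ℂ) (hψ : evnorm ψ = 1) (hφ : evnorm φ = 1)
    (ρ σ : Matrix (Fin dA) (Fin dA) ℂ)
    (hρdef : ρ = ptraceB (outer ψ ψ)) (hσdef : σ = ptraceB (outer φ φ))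
    (P : Polynomial ℝ)
    (hodd : ∀ x : ℝ, P.eval (-x) = -P.eval x)
    (hbound : ∀ x : ℝ, -1 ≤ x → x ≤ 1 → |P.eval x| ≤ 2)
    (happrox : ∀ x : ℝ, -1 ≤ x → x ≤ 1 → κ ≤ |x| → |P.eval x - Real.sign x| ≤ κ)
    (K : Matrix (Fin dB) (Fin dB) ℂ) (hKdef : K = ptraceA (outer ψ φ))
    (U V : Matrix (Fin dB) (Fin dB) ℂ)
    (hU : U ∈ Matrix.unitaryGroup (Fin dB) ℂ) (hV : V ∈ Matrix.unitaryGroup (Fin dB) ℂ)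
    (s : Fin dB → ℝ) (hs : ∀ i, 0 ≤ s i)
    (hSVD : K = U * Matrix.diagonal (fun i => (s i : ℂ)) * Vᴴ)
    (Wt : Matrix (Fin dB) (Fin dB) ℂ)
    (hW : Wt = U * Matrix.diagonal (fun i => (Complex.ofReal (P.eval (s i / α)))) * Vᴴ) :
    ∀ (hρ : ρ.PosSemidef) (hσ : σ.PosSemidef),
      ‖star ψ ⬝ᵥ (((1 : Matrix (Fin dA) (Fin dA) ℂ) ⊗ₖ Wt) *ᵥ φ) - (fidelity hρ hσ : ℂ)‖
        ≤ 4 * dA * α * κ :=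
  uhlmann_explicit_robust_general dA dB κ α hκ0 hα ψ φ hψ hφ ρ σ hρdef hσdef P hbound happrox K
    hKdef U V hU hV s hs hSVD Wt hW
end

section
/- Let R be a d×d complex matrix with a singular value decomposition R = U·Σ·V†, and let f: ℝ → ℝ be an odd function. Let Q be the Hermitian 2d×2d block matrix Q = [[0, R†],[R, 0]] (i.e., Q = |0⟩⟨1|⊗R† + |1⟩⟨0|⊗R). Then f(Q), defined via the spectral decomposition of Q, equals [[0, S†],[S, 0]] where S = U·f(Σ)·V† and f(Σ) is obtained by applying f to each diagonal entry of Σ. -/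
open scoped Matrix Kronecker ComplexOrder

/-!
Write `R = U Σ V†`. With `W = [[V, V], [U, -U]]`, whose inverse is `W† / 2`, one checks
`Q = W · diag(Σ, -Σ) · W⁻¹`, and the same identity holds with `Σ` replaced by any real diagonal
matrix. Since `f(Q)` can be computed from any diagonalization of `Q` (both sides agree with `p(Q)`
for a polynomial `p` interpolating `f` on the eigenvalues), `f(Q) = W · diag(f(Σ), f(-Σ)) · W⁻¹`,
and oddness turns `f(-Σ)` into `-f(Σ)`.
-/

open Matrix Polynomial

theorem Polynomial.exists_eval_eq_on_finset {F : Type*} [Field F] (s : Finset F) (f : F → F) :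
    ∃ p : F[X], ∀ x ∈ s, p.eval x = f x := by
  classical
  exact ⟨Lagrange.interpolate s id f, fun _ hx =>
    Lagrange.eval_interpolate_at_node f (Set.injOn_id _) hx⟩

theorem Polynomial.aeval_units_conj {R A : Type*} [CommSemiring R] [Ring A] [Algebra R A]
    (u : Aˣ) (a : A) (p : R[X]) : aeval (u * a * ↑u⁻¹ : A) p = u * aeval a p * ↑u⁻¹ := by
  simpa [ConjAct.units_smul_def] using
    aeval_algHom_apply (MulSemiringAction.toAlgEquiv R A (ConjAct.toConjAct u)) a p

theorem Polynomial.aeval_diagonal {R α n : Type*} [CommSemiring R] [CommSemiring α] [Algebra R α]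
    [Fintype n] [DecidableEq n] (c : n → α) (p : R[X]) :
    aeval (diagonal c) p = diagonal fun i => aeval (c i) p := by
  simpa [aeval_pi_apply] using aeval_algHom_apply (diagonalAlgHom R) c p

theorem matFun_eq_of_eq_conj_diagonal {n : Type*} [Fintype n] [DecidableEq n] {A : Matrix n n ℂ}
    (hA : A.IsHermitian) (f : ℝ → ℝ) (u : (Matrix n n ℂ)ˣ) (μ : n → ℝ)
    (hAu : A = u * diagonal (fun i => (μ i : ℂ)) * (↑u⁻¹ : Matrix n n ℂ)) :
    matFun hA f = u * diagonal (fun i => (f (μ i) : ℂ)) * (↑u⁻¹ : Matrix n n ℂ) := by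
  classical
  obtain ⟨p, hp⟩ :=
    exists_eval_eq_on_finset (Finset.univ.image hA.eigenvalues ∪ Finset.univ.image μ) f
  have aeval_conj_diagonal (v : (Matrix n n ℂ)ˣ) (ν : n → ℝ) (hν : ∀ i, p.eval (ν i) = f (ν i)) :
      aeval (v * diagonal (fun i => (ν i : ℂ)) * (↑v⁻¹ : Matrix n n ℂ)) p =
        v * diagonal (fun i => (f (ν i) : ℂ)) * (↑v⁻¹ : Matrix n n ℂ) := by
    rw [aeval_units_conj, aeval_diagonal]
    congr; funext i
    rw [← hν]
    exact aeval_ofReal p (ν i)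
  let E := Unitary.toUnits hA.eigenvectorUnitary
  have hspec : A = E * diagonal (fun i => (hA.eigenvalues i : ℂ)) * (↑E⁻¹ : Matrix n n ℂ) := by
    simpa [E, Function.comp_def] using hA.spectral_theorem
  calc matFun hA f = aeval A p := by
        conv_rhs => rw [hspec]
        rw [aeval_conj_diagonal _ _ fun i => hp _ (by simp)]
        simp [E, matFun]
    _ = _ := by rw [hAu, aeval_conj_diagonal _ _ fun i => hp _ (by simp)]

theorem exists_units_fromBlocks_conj_diagonal {n : Type*} [Fintype n] [DecidableEq n]
    {U V : Matrix n n ℂ} (hU : U ∈ unitaryGroup n ℂ) (hV : V ∈ unitaryGroup n ℂ) :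
    ∃ u : (Matrix (n ⊕ n) (n ⊕ n) ℂ)ˣ, ∀ t : n → ℝ,
      fromBlocks 0 (U * diagonal (fun i => (t i : ℂ)) * Vᴴ)ᴴ
          (U * diagonal (fun i => (t i : ℂ)) * Vᴴ) 0 =
        (u : Matrix (n ⊕ n) (n ⊕ n) ℂ) * diagonal (fun i => ((Sum.elim t (-t) i : ℝ) : ℂ)) *
          (↑u⁻¹ : Matrix (n ⊕ n) (n ⊕ n) ℂ) := by
  have hUU : U * Uᴴ = 1 := mem_unitaryGroup_iff.mp hU
  have hVV : V * Vᴴ = 1 := mem_unitaryGroup_iff.mp hV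
  have hUU' : Uᴴ * U = 1 := mem_unitaryGroup_iff'.mp hU
  have hVV' : Vᴴ * V = 1 := mem_unitaryGroup_iff'.mp hV
  have half_add (X : Matrix n n ℂ) : (2⁻¹ : ℂ) • (X + X) = X := by
    rw [← two_smul ℂ X, smul_smul, inv_mul_cancel₀ two_ne_zero, one_smul]
  refine ⟨⟨fromBlocks V V U (-U), (2⁻¹ : ℂ) • fromBlocks Vᴴ Uᴴ Vᴴ (-Uᴴ), ?_, ?_⟩, fun t => ?_⟩
  · rw [mul_smul_comm, fromBlocks_multiply]
    simp only [hUU, hVV, mul_neg, neg_mul, neg_neg, add_neg_cancel, fromBlocks_smul, smul_zero,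
      half_add, fromBlocks_one]
  · rw [smul_mul_assoc, fromBlocks_multiply]
    simp only [hUU', hVV', mul_neg, neg_mul, neg_neg, add_neg_cancel, fromBlocks_smul, smul_zero,
      half_add, fromBlocks_one]
  · have hD : diagonal (fun i => ((Sum.elim t (-t) i : ℝ) : ℂ)) =
        fromBlocks (diagonal fun i => (t i : ℂ)) 0 0 (-diagonal fun i => (t i : ℂ)) := by
      rw [diagonal_neg, fromBlocks_diagonal]
      congr; funext i; cases i <;> simp
    have hDstar : (diagonal fun i => (t i : ℂ))ᴴ = diagonal fun i => (t i : ℂ) := by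
      rw [diagonal_conjTranspose]; congr; funext i; simp
    generalize diagonal (fun i => (t i : ℂ)) = D at hD hDstar ⊢
    rw [hD, Units.val_mk, Units.inv_mk, mul_smul_comm, fromBlocks_multiply, fromBlocks_multiply]
    simp only [conjTranspose_mul, conjTranspose_conjTranspose, hDstar, Matrix.mul_assoc,
      Matrix.mul_zero, neg_zero, add_zero, zero_add, mul_neg, neg_mul, neg_neg,
      add_neg_cancel, fromBlocks_smul, smul_zero, half_add]

theorem odd_function_hermitian_dilation_general (d : ℕ)
    (R U V : Matrix (Fin d) (Fin d) ℂ)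
    (hU : U ∈ Matrix.unitaryGroup (Fin d) ℂ) (hV : V ∈ Matrix.unitaryGroup (Fin d) ℂ)
    (s : Fin d → ℝ)
    (hSVD : R = U * Matrix.diagonal (fun i => (s i : ℂ)) * Vᴴ)
    (f : ℝ → ℝ) (hf : ∀ x : ℝ, f (-x) = -f x)
    (Q : Matrix (Fin d ⊕ Fin d) (Fin d ⊕ Fin d) ℂ)
    (hQ : Q = Matrix.fromBlocks 0 Rᴴ R 0)
    (hQherm : Q.IsHermitian) :
    matFun hQherm f =
      Matrix.fromBlocks 0 (U * Matrix.diagonal (fun i => (f (s i) : ℂ)) * Vᴴ)ᴴ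
        (U * Matrix.diagonal (fun i => (f (s i) : ℂ)) * Vᴴ) 0 := by
  obtain ⟨u, hu⟩ := exists_units_fromBlocks_conj_diagonal hU hV
  have hQu := hu s
  rw [← hSVD, ← hQ] at hQu
  have hf_sum_elim : (fun i => (f (Sum.elim s (-s) i) : ℂ)) =
      fun i => ((Sum.elim (fun j => f (s j)) (-fun j => f (s j)) i : ℝ) : ℂ) := by
    funext i; cases i <;> simp [hf]
  rw [matFun_eq_of_eq_conj_diagonal hQherm f u _ hQu, hf_sum_elim, ← hu]

/-- Odd functions applied to the Hermitian dilation of a matrix: for `R = U Σ V†` and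
`Q = [[0, R†],[R, 0]]`, and `f` odd, `f(Q) = [[0, S†],[S, 0]]` with `S = U f(Σ) V†`. -/
theorem odd_function_hermitian_dilation (d : ℕ)
    (R U V : Matrix (Fin d) (Fin d) ℂ)
    (hU : U ∈ Matrix.unitaryGroup (Fin d) ℂ) (hV : V ∈ Matrix.unitaryGroup (Fin d) ℂ)
    (s : Fin d → ℝ) (hs : ∀ i, 0 ≤ s i)
    (hSVD : R = U * Matrix.diagonal (fun i => (s i : ℂ)) * Vᴴ)
    (f : ℝ → ℝ) (hf : ∀ x : ℝ, f (-x) = -f x)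
    (Q : Matrix (Fin d ⊕ Fin d) (Fin d ⊕ Fin d) ℂ)
    (hQ : Q = Matrix.fromBlocks 0 Rᴴ R 0)
    (hQherm : Q.IsHermitian) :
    matFun hQherm f =
      Matrix.fromBlocks 0 (U * Matrix.diagonal (fun i => (f (s i) : ℂ)) * Vᴴ)ᴴ
        (U * Matrix.diagonal (fun i => (f (s i) : ℂ)) * Vᴴ) 0 :=
  odd_function_hermitian_dilation_general d R U V hU hV s hSVD f hf Q hQ hQherm
end
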